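/- arXiv:0707.1175 — 3 statements merged into one kernel-verified Lean document; each statement's English description precedes it below -/
import Mathlib

section
/- Let A be a ring and let (a, b, a', b') be a cross on an A-module E with outer terms (X, Y, M, N), i.e. 0 → N →a E →b M → 0 and 0 → Y →a' E →b' X → 0 are short exact sequences. Then the stabilizer {g ∈ Aut_A(E) : g∘a = a, b∘g = b, g∘a' = a', b'∘g = b'} equals the set {id_E + a'∘f∘b' : f ∈ Hom_A(X, Y) with (b∘a')∘f = 0 and f∘(b'∘a) = 0}. Moreover, the map sending h ∈ Hom_A(coker(b'∘a), ker(b∘a')) to id_E + a'∘ι∘h∘π∘b', where π : X → coker(b'∘a) = X/range(b'∘a) is the projection and ι : ker(b∘a') → Y is the inclusion, is a bijection from Hom_A(coker(b'∘a), ker(b∘a')) onto this stabilizer. -/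
/-!
An automorphism `g` fixing the cross differs from the identity by `φ = g - id`, which kills
`ker b' = range a'` and takes values in `ker b' = range a'`; hence `φ = a' ∘ f ∘ b'` for a unique
`f : X → Y`, and fixing `a` and `b` means exactly that `f` kills `range (b' ∘ a)` and lands in
`ker (b ∘ a')`. Conversely `id + a' ∘ f ∘ b'` is invertible because `(a' ∘ f ∘ b')² = 0`.
-/

section

open LinearMap

variable {A E X Y M N : Type*} [Ring A] [AddCommGroup E] [Module A E]
  [AddCommGroup X] [Module A X] [AddCommGroup Y] [Module A Y]
  [AddCommGroup M] [Module A M] [AddCommGroup N] [Module A N]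

namespace LinearMap

theorem exists_comp_eq_of_ker_le {g : E →ₗ[A] X} (hg : Function.Surjective g)
    {f : E →ₗ[A] Y} (h : ker g ≤ ker f) : ∃ f' : X →ₗ[A] Y, f' ∘ₗ g = f :=
  ⟨(ker g).liftQ f h ∘ₗ (g.quotKerEquivOfSurjective hg).symm.toLinearMap, by
    ext x; simp [quotKerEquivOfSurjective_symm_apply]⟩

theorem exists_comp_eq_of_range_le {g : Y →ₗ[A] E} (hg : Function.Injective g)
    {f : X →ₗ[A] E} (h : range f ≤ range g) : ∃ f' : X →ₗ[A] Y, g ∘ₗ f' = f :=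
  ⟨(LinearEquiv.ofInjective g hg).symm.toLinearMap ∘ₗ
      f.codRestrict (range g) fun x => h (mem_range_self f x), by ext x; simp⟩

theorem exists_eq_comp_comp_of_ker_le_of_range_le {i : Y →ₗ[A] E} (hi : Function.Injective i)
    {p : E →ₗ[A] X} (hp : Function.Surjective p) {φ : E →ₗ[A] E} (hker : ker p ≤ ker φ)
    (hrange : range φ ≤ range i) : ∃ f : X →ₗ[A] Y, φ = i ∘ₗ f ∘ₗ p := by
  obtain ⟨ψ, rfl⟩ := exists_comp_eq_of_ker_le hp hker
  rw [range_comp_of_range_eq_top _ (range_eq_top.2 hp)] at hrange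
  obtain ⟨f, rfl⟩ := exists_comp_eq_of_range_le (f := ψ) hi hrange
  exact ⟨f, rfl⟩

end LinearMap

namespace LinearEquiv

def idAddOfCompSelfEqZero (u : E →ₗ[A] E) (hu : u ∘ₗ u = 0) : E ≃ₗ[A] E :=
  ofLinearMap (LinearMap.id + u) (LinearMap.id - u)
    (by simp only [LinearMap.add_comp, LinearMap.comp_sub, LinearMap.id_comp,
      LinearMap.comp_id, hu]; abel)
    (by simp only [LinearMap.sub_comp, LinearMap.comp_add, LinearMap.id_comp,
      LinearMap.comp_id, hu]; abel)

@[simp]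
theorem coe_idAddOfCompSelfEqZero (u : E →ₗ[A] E) (hu : u ∘ₗ u = 0) :
    (idAddOfCompSelfEqZero u hu : E →ₗ[A] E) = LinearMap.id + u :=
  rfl

end LinearEquiv

def quotRangeHomKerEquiv (u : Y →ₗ[A] M) (v : N →ₗ[A] X) :
    (X ⧸ range v →ₗ[A] ker u) ≃ {f : X →ₗ[A] Y // u ∘ₗ f = 0 ∧ f ∘ₗ v = 0} where
  toFun h := ⟨(ker u).subtype ∘ₗ h ∘ₗ (range v).mkQ, by ext x; simp,
    by ext n; simp [(Submodule.Quotient.mk_eq_zero _).2 (mem_range_self v n)]⟩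
  invFun f := (range v).liftQ (LinearMap.codRestrict (ker u) f.1 fun x => by
      simpa using LinearMap.congr_fun f.2.1 x)
    (by rintro _ ⟨n, rfl⟩; ext; simpa using LinearMap.congr_fun f.2.2 n)
  left_inv h := by ext; simp
  right_inv f := by ext; simp

variable (a : N →ₗ[A] E) (b : E →ₗ[A] M) (a' : Y →ₗ[A] E) (b' : E →ₗ[A] X)

def FixesCross (g : E →ₗ[A] E) : Prop :=
  g ∘ₗ a = a ∧ b ∘ₗ g = b ∧ g ∘ₗ a' = a' ∧ b' ∘ₗ g = b'

variable {a b a' b'}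

theorem comp_comp_self_eq_zero (hb'a' : b' ∘ₗ a' = 0) (f : X →ₗ[A] Y) :
    (a' ∘ₗ f ∘ₗ b') ∘ₗ (a' ∘ₗ f ∘ₗ b') = 0 := by
  simp only [comp_assoc]
  rw [← comp_assoc _ a' b', hb'a', zero_comp, comp_zero, comp_zero]

theorem fixesCross_id_add (hb'a' : b' ∘ₗ a' = 0) {f : X →ₗ[A] Y}
    (hf₁ : (b ∘ₗ a') ∘ₗ f = 0) (hf₂ : f ∘ₗ (b' ∘ₗ a) = 0) :
    FixesCross a b a' b' (LinearMap.id + a' ∘ₗ f ∘ₗ b') := by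
  have h₁ (x : X) : b (a' (f x)) = 0 := LinearMap.congr_fun hf₁ x
  have h₂ (n : N) : f (b' (a n)) = 0 := LinearMap.congr_fun hf₂ n
  have h₃ (y : Y) : b' (a' y) = 0 := LinearMap.congr_fun hb'a' y
  refine ⟨?_, ?_, ?_, ?_⟩ <;> ext <;> simp [h₁, h₂, h₃]

theorem exists_eq_id_add_of_fixesCross (ha' : Function.Injective a')
    (hb' : Function.Surjective b') (hab' : range a' = ker b') {g : E →ₗ[A] E}
    (hg : FixesCross a b a' b' g) :
    ∃ f : X →ₗ[A] Y, (b ∘ₗ a') ∘ₗ f = 0 ∧ f ∘ₗ (b' ∘ₗ a) = 0 ∧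
      g = LinearMap.id + a' ∘ₗ f ∘ₗ b' := by
  obtain ⟨hga, hbg, hga', hb'g⟩ := hg
  have hker : ker b' ≤ ker (g - LinearMap.id) := by
    rw [← hab']
    rintro _ ⟨y, rfl⟩
    simpa [sub_eq_zero] using LinearMap.congr_fun hga' y
  have hrange : range (g - LinearMap.id) ≤ range a' := by
    rw [hab']
    rintro _ ⟨x, rfl⟩
    simpa [sub_eq_zero] using LinearMap.congr_fun hb'g x
  obtain ⟨f, hf⟩ := exists_eq_comp_comp_of_ker_le_of_range_le ha' hb' hker hrange
  refine ⟨f, ?_, ?_, by rw [← hf]; abel⟩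
  · rw [← cancel_right hb', zero_comp, comp_assoc, comp_assoc, ← hf, comp_sub, hbg,
      comp_id, sub_self]
  · rw [← cancel_left ha', comp_zero]
    calc a' ∘ₗ f ∘ₗ b' ∘ₗ a = (g - LinearMap.id) ∘ₗ a := by rw [hf]; rfl
      _ = 0 := by rw [sub_comp, hga, LinearMap.id_comp, sub_self]

theorem fixesCross_iff (ha' : Function.Injective a') (hb' : Function.Surjective b')
    (hab' : range a' = ker b') (g : E →ₗ[A] E) :
    FixesCross a b a' b' g ↔ ∃ f : X →ₗ[A] Y, (b ∘ₗ a') ∘ₗ f = 0 ∧ f ∘ₗ (b' ∘ₗ a) = 0 ∧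
      g = LinearMap.id + a' ∘ₗ f ∘ₗ b' := by
  refine ⟨exists_eq_id_add_of_fixesCross ha' hb' hab', ?_⟩
  rintro ⟨f, hf₁, hf₂, rfl⟩
  exact fixesCross_id_add (range_le_ker_iff.1 hab'.le) hf₁ hf₂

noncomputable def crossStabilizerEquiv (ha' : Function.Injective a')
    (hb' : Function.Surjective b') (hab' : range a' = ker b') :
    {f : X →ₗ[A] Y // (b ∘ₗ a') ∘ₗ f = 0 ∧ f ∘ₗ (b' ∘ₗ a) = 0} ≃
      {g : E ≃ₗ[A] E // FixesCross a b a' b' g} :=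
  have hb'a' : b' ∘ₗ a' = 0 := range_le_ker_iff.1 hab'.le
  Equiv.ofBijective
    (fun f => ⟨.idAddOfCompSelfEqZero _ (comp_comp_self_eq_zero hb'a' f.1),
      fixesCross_id_add hb'a' f.2.1 f.2.2⟩)
    ⟨fun f₁ f₂ h => by
      have h := congr_arg (fun g : {g : E ≃ₗ[A] E // _} => (g.1 : E →ₗ[A] E)) h
      simp only [LinearEquiv.coe_idAddOfCompSelfEqZero, add_right_inj,
        cancel_left ha', cancel_right hb'] at h
      exact Subtype.ext h,
    fun ⟨g, hg⟩ => by
      obtain ⟨f, hf₁, hf₂, hgf⟩ := exists_eq_id_add_of_fixesCross ha' hb' hab' hg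
      exact ⟨⟨f, hf₁, hf₂⟩, Subtype.ext (LinearEquiv.toLinearMap_injective hgf.symm)⟩⟩

end

theorem stabilizer_of_cross_general
    (A E X Y M N : Type*) [Ring A] [AddCommGroup E] [Module A E]
    [AddCommGroup X] [Module A X] [AddCommGroup Y] [Module A Y]
    [AddCommGroup M] [Module A M] [AddCommGroup N] [Module A N]
    (a : N →ₗ[A] E) (b : E →ₗ[A] M) (a' : Y →ₗ[A] E) (b' : E →ₗ[A] X)
    (ha' : Function.Injective a') (hb' : Function.Surjective b')
    (hab' : LinearMap.range a' = LinearMap.ker b') :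
    ({g : E ≃ₗ[A] E |
        (g : E →ₗ[A] E) ∘ₗ a = a ∧ b ∘ₗ (g : E →ₗ[A] E) = b ∧
        (g : E →ₗ[A] E) ∘ₗ a' = a' ∧ b' ∘ₗ (g : E →ₗ[A] E) = b'} =
      {g : E ≃ₗ[A] E | ∃ f : X →ₗ[A] Y,
        (b ∘ₗ a') ∘ₗ f = 0 ∧ f ∘ₗ (b' ∘ₗ a) = 0 ∧
        (g : E →ₗ[A] E) = LinearMap.id + a' ∘ₗ f ∘ₗ b'}) ∧
    ∃ e : ((X ⧸ LinearMap.range (b' ∘ₗ a)) →ₗ[A] ↥(LinearMap.ker (b ∘ₗ a'))) ≃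
        {g : E ≃ₗ[A] E //
          (g : E →ₗ[A] E) ∘ₗ a = a ∧ b ∘ₗ (g : E →ₗ[A] E) = b ∧
          (g : E →ₗ[A] E) ∘ₗ a' = a' ∧ b' ∘ₗ (g : E →ₗ[A] E) = b'},
      ∀ (h : (X ⧸ LinearMap.range (b' ∘ₗ a)) →ₗ[A] ↥(LinearMap.ker (b ∘ₗ a')))
        (x : E),
        (e h).1 x =
          x + a' ((LinearMap.ker (b ∘ₗ a')).subtype
            (h (Submodule.Quotient.mk (b' x)))) :=
  ⟨Set.ext fun g => fixesCross_iff ha' hb' hab' g,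
    (quotRangeHomKerEquiv _ _).trans (crossStabilizerEquiv ha' hb' hab'), fun _ _ => rfl⟩

/-- The stabilizer of a cross `(a, b, a', b')` on `E` with outer terms
`(X, Y, M, N)` consists of the automorphisms `id_E + a'∘f∘b'` with
`(b∘a')∘f = 0` and `f∘(b'∘a) = 0`, and it is in bijection with
`Hom_A(coker(b'∘a), ker(b∘a'))`. -/
theorem stabilizer_of_cross
    (A E X Y M N : Type*) [Ring A] [AddCommGroup E] [Module A E]
    [AddCommGroup X] [Module A X] [AddCommGroup Y] [Module A Y]
    [AddCommGroup M] [Module A M] [AddCommGroup N] [Module A N]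
    (a : N →ₗ[A] E) (b : E →ₗ[A] M) (a' : Y →ₗ[A] E) (b' : E →ₗ[A] X)
    (ha : Function.Injective a) (hb : Function.Surjective b)
    (hab : LinearMap.range a = LinearMap.ker b)
    (ha' : Function.Injective a') (hb' : Function.Surjective b')
    (hab' : LinearMap.range a' = LinearMap.ker b') :
    ({g : E ≃ₗ[A] E |
        (g : E →ₗ[A] E) ∘ₗ a = a ∧ b ∘ₗ (g : E →ₗ[A] E) = b ∧
        (g : E →ₗ[A] E) ∘ₗ a' = a' ∧ b' ∘ₗ (g : E →ₗ[A] E) = b'} =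
      {g : E ≃ₗ[A] E | ∃ f : X →ₗ[A] Y,
        (b ∘ₗ a') ∘ₗ f = 0 ∧ f ∘ₗ (b' ∘ₗ a) = 0 ∧
        (g : E →ₗ[A] E) = LinearMap.id + a' ∘ₗ f ∘ₗ b'}) ∧
    ∃ e : ((X ⧸ LinearMap.range (b' ∘ₗ a)) →ₗ[A] ↥(LinearMap.ker (b ∘ₗ a'))) ≃
        {g : E ≃ₗ[A] E //
          (g : E →ₗ[A] E) ∘ₗ a = a ∧ b ∘ₗ (g : E →ₗ[A] E) = b ∧
          (g : E →ₗ[A] E) ∘ₗ a' = a' ∧ b' ∘ₗ (g : E →ₗ[A] E) = b'},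
      ∀ (h : (X ⧸ LinearMap.range (b' ∘ₗ a)) →ₗ[A] ↥(LinearMap.ker (b ∘ₗ a')))
        (x : E),
        (e h).1 x =
          x + a' ((LinearMap.ker (b ∘ₗ a')).subtype
            (h (Submodule.Quotient.mk (b' x)))) :=
  stabilizer_of_cross_general A E X Y M N a b a' b' ha' hb' hab'
end

section
/- Let A be a ring and let (a, b, a', b') be a cross on an A-module E with outer terms (X, Y, M, N), i.e. 0 → N →a E →b M → 0 and 0 → Y →a' E →b' X → 0 are short exact sequences. Set D = ker(b'∘a : N → X) and B = range(b∘a' : Y → M). Then: (i) for every n ∈ D there is a unique element e₁(n) ∈ Y with a'(e₁(n)) = a(n), and the resulting map e₁ : D → Y is an injective A-module homomorphism; (ii) the corestriction e₂ : Y → B of b∘a' is surjective and ker e₂ = range e₁, so 0 → D →e₁ Y →e₂ B → 0 is exact; (iii) b'∘a induces an injective A-module homomorphism e₃ : N/D → X, the assignment e₄(x) = b(e) + B for any e ∈ E with b'(e) = x gives a well-defined surjective A-module homomorphism e₄ : X → M/B, and ker e₄ = range e₃, so 0 → N/D →e₃ X →e₄ M/B → 0 is exact. -/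
/-!
Both rows come from a diagram chase in the cross. `e₁` reads `a|_D` through the injection
`a'`, which is possible because `b'` kills `a(D)`, and `e₄` pushes `b` (mod `B`) through the
surjection `b'`, which is possible because `ker b' = range a'` is mapped into `B` by `b`.
If `b (a' y) = 0` then `a' y = a n`, and `n ∈ D` since `b' ∘ a' = 0`; if `b e ∈ B`, say
`b e = b (a' y)`, then `e - a' y = a n` and `b' e = b' (a n)`.
-/

open Function LinearMap Submodule

namespace LinearMap

variable {R D E X Y Q : Type*} [Ring R] [AddCommGroup D] [Module R D] [AddCommGroup E]
  [Module R E] [AddCommGroup X] [Module R X] [AddCommGroup Y] [Module R Y]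
  [AddCommGroup Q] [Module R Q]

noncomputable def liftOfRangeLE (i : Y →ₗ[R] E) (hi : Injective i) (f : D →ₗ[R] E)
    (h : range f ≤ range i) : D →ₗ[R] Y :=
  (LinearEquiv.ofInjective i hi).symm.toLinearMap ∘ₗ
    f.codRestrict (range i) fun d => h (mem_range_self f d)

@[simp]
theorem apply_liftOfRangeLE (i : Y →ₗ[R] E) (hi : Injective i) (f : D →ₗ[R] E)
    (h : range f ≤ range i) (d : D) : i (liftOfRangeLE i hi f h d) = f d :=
  LinearEquiv.ofInjective_symm_apply (h := hi) _ _

theorem injective_liftOfRangeLE (i : Y →ₗ[R] E) (hi : Injective i) {f : D →ₗ[R] E}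
    (hf : Injective f) (h : range f ≤ range i) : Injective (liftOfRangeLE i hi f h) := by
  intro d d' hd
  apply hf
  rw [← apply_liftOfRangeLE i hi f h, hd, apply_liftOfRangeLE]

noncomputable def descOfKerLE (p : E →ₗ[R] X) (hp : Surjective p) (g : E →ₗ[R] Q)
    (h : ker p ≤ ker g) : X →ₗ[R] Q :=
  (ker p).liftQ g h ∘ₗ (p.quotKerEquivOfSurjective hp).symm.toLinearMap

@[simp]
theorem descOfKerLE_apply (p : E →ₗ[R] X) (hp : Surjective p) (g : E →ₗ[R] Q)
    (h : ker p ≤ ker g) (e : E) : descOfKerLE p hp g h (p e) = g e := by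
  simp [descOfKerLE]

theorem surjective_descOfKerLE (p : E →ₗ[R] X) (hp : Surjective p) {g : E →ₗ[R] Q}
    (hg : Surjective g) (h : ker p ≤ ker g) : Surjective (descOfKerLE p hp g h) := by
  intro q
  obtain ⟨e, rfl⟩ := hg q
  exact ⟨p e, descOfKerLE_apply p hp g h e⟩

end LinearMap

namespace Cross

variable {R E X Y M N : Type*} [Ring R] [AddCommGroup E] [Module R E]
  [AddCommGroup X] [Module R X] [AddCommGroup Y] [Module R Y]
  [AddCommGroup M] [Module R M] [AddCommGroup N] [Module R N]
  {a : N →ₗ[R] E} {b : E →ₗ[R] M} {a' : Y →ₗ[R] E} {b' : E →ₗ[R] X}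

theorem range_comp_subtype_ker_le (hab' : Exact a' b') :
    range (a ∘ₗ (ker (b' ∘ₗ a)).subtype) ≤ range a' := by
  rintro _ ⟨n, rfl⟩
  exact (hab' _).mp n.2

theorem ker_le_ker_mkQ_comp (hab' : Exact a' b') :
    ker b' ≤ ker ((range (b ∘ₗ a')).mkQ ∘ₗ b) := by
  intro e he
  obtain ⟨y, rfl⟩ := (hab' e).mp he
  simp

theorem ker_comp_eq_range_of_lift (hab : Exact a b) (hab' : Exact a' b')
    (ha' : Injective a') {e₁ : ker (b' ∘ₗ a) →ₗ[R] Y} (he₁ : ∀ n, a' (e₁ n) = a n) :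
    ker (b ∘ₗ a') = range e₁ := by
  ext y
  constructor
  · intro hy
    obtain ⟨n, hn⟩ := (hab (a' y)).mp hy
    have hnD : n ∈ ker (b' ∘ₗ a) := by
      simpa [hn] using hab'.apply_apply_eq_zero y
    exact ⟨⟨n, hnD⟩, ha' ((he₁ _).trans hn)⟩
  · rintro ⟨n, rfl⟩
    simpa [he₁] using hab.apply_apply_eq_zero n

theorem ker_eq_range_liftQ_of_desc (hab : Exact a b) (hab' : Exact a' b')
    (hb' : Surjective b') {e₄ : X →ₗ[R] M ⧸ range (b ∘ₗ a')}
    (he₄ : ∀ e, e₄ (b' e) = Submodule.Quotient.mk (b e)) :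
    ker e₄ = range ((ker (b' ∘ₗ a)).liftQ (b' ∘ₗ a) le_rfl) := by
  ext x
  obtain ⟨e, rfl⟩ := hb' x
  constructor
  · intro he
    obtain ⟨y, hy⟩ : b e ∈ range (b ∘ₗ a') := by
      rwa [mem_ker, he₄, Submodule.Quotient.mk_eq_zero] at he
    obtain ⟨n, hn⟩ := (hab (e - a' y)).mp (by simp [← hy])
    refine ⟨Submodule.Quotient.mk n, ?_⟩
    simp [hn, hab'.apply_apply_eq_zero]
  · rintro ⟨n, hn⟩
    obtain ⟨n, rfl⟩ := Submodule.Quotient.mk_surjective _ n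
    rw [mem_ker, ← hn, liftQ_apply, LinearMap.comp_apply, he₄, hab.apply_apply_eq_zero n]
    simp

end Cross

/-- A cross `(a, b, a', b')` on `E` with outer terms `(X, Y, M, N)` induces,
with `D = ker(b'∘a)` and `B = range(b∘a')`, two short exact sequences
`0 → D →e₁ Y →e₂ B → 0` and `0 → N/D →e₃ X →e₄ M/B → 0`, where
`a'∘e₁ = a|_D`, `e₂` is the corestriction of `b∘a'`, `e₃` is induced by
`b'∘a`, and `e₄(b'(e)) = b(e) + B`. -/
theorem cross_induces_exact_rows
    (A E X Y M N : Type*) [Ring A] [AddCommGroup E] [Module A E]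
    [AddCommGroup X] [Module A X] [AddCommGroup Y] [Module A Y]
    [AddCommGroup M] [Module A M] [AddCommGroup N] [Module A N]
    (a : N →ₗ[A] E) (b : E →ₗ[A] M) (a' : Y →ₗ[A] E) (b' : E →ₗ[A] X)
    (ha : Function.Injective a) (hb : Function.Surjective b)
    (hab : LinearMap.range a = LinearMap.ker b)
    (ha' : Function.Injective a') (hb' : Function.Surjective b')
    (hab' : LinearMap.range a' = LinearMap.ker b') :
    ∃ (e₁ : ↥(LinearMap.ker (b' ∘ₗ a)) →ₗ[A] Y)
      (e₂ : Y →ₗ[A] ↥(LinearMap.range (b ∘ₗ a')))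
      (e₃ : (N ⧸ LinearMap.ker (b' ∘ₗ a)) →ₗ[A] X)
      (e₄ : X →ₗ[A] (M ⧸ LinearMap.range (b ∘ₗ a'))),
      -- (i) e₁ is the unique lift of a|_D through a', and is injective
      (∀ n : ↥(LinearMap.ker (b' ∘ₗ a)), a' (e₁ n) = a (n : N)) ∧
      (∀ (n : ↥(LinearMap.ker (b' ∘ₗ a))) (y : Y), a' y = a (n : N) → y = e₁ n) ∧
      Function.Injective e₁ ∧
      -- (ii) e₂ is the corestriction of b∘a', surjective, with ker e₂ = range e₁
      (∀ y : Y, ((e₂ y : M) = b (a' y))) ∧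
      Function.Surjective e₂ ∧
      LinearMap.ker e₂ = LinearMap.range e₁ ∧
      -- (iii) e₃ induced by b'∘a is injective; e₄ is well defined by
      --       e₄(b' e) = b e + B, surjective, with ker e₄ = range e₃
      (∀ n : N, e₃ (Submodule.Quotient.mk n) = b' (a n)) ∧
      Function.Injective e₃ ∧
      (∀ x : E, e₄ (b' x) = Submodule.Quotient.mk (b x)) ∧
      Function.Surjective e₄ ∧
      LinearMap.ker e₄ = LinearMap.range e₃ := by
  have hab_exact : Exact a b := LinearMap.exact_iff.mpr hab.symm
  have hab'_exact : Exact a' b' := LinearMap.exact_iff.mpr hab'.symm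
  have hD : range (a ∘ₗ (ker (b' ∘ₗ a)).subtype) ≤ range a' :=
    Cross.range_comp_subtype_ker_le hab'_exact
  have hB : ker b' ≤ ker ((range (b ∘ₗ a')).mkQ ∘ₗ b) := Cross.ker_le_ker_mkQ_comp hab'_exact
  have he₁ := apply_liftOfRangeLE a' ha' _ hD
  have he₄ := descOfKerLE_apply b' hb' _ hB
  refine ⟨liftOfRangeLE a' ha' _ hD, (b ∘ₗ a').rangeRestrict,
    (ker (b' ∘ₗ a)).liftQ (b' ∘ₗ a) le_rfl, descOfKerLE b' hb' _ hB,
    he₁, fun n y hy => ha' (hy.trans (he₁ n).symm),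
    injective_liftOfRangeLE a' ha' (by rw [coe_comp]; exact ha.comp (injective_subtype _)) hD,
    fun _ => rfl, (b ∘ₗ a').surjective_rangeRestrict, ?_,
    fun _ => rfl, ker_eq_bot.mp (ker_liftQ_eq_bot _ _ _ le_rfl),
    he₄, surjective_descOfKerLE b' hb' ((range (b ∘ₗ a')).mkQ_surjective.comp hb) hB,
    Cross.ker_eq_range_liftQ_of_desc hab_exact hab'_exact hb' he₄⟩
  rw [ker_rangeRestrict]
  exact Cross.ker_comp_eq_range_of_lift hab_exact hab'_exact ha' he₁
end

section
/- Let k be a field, Λ a k-algebra, and (a, b, a', b') a cross on a Λ-module E with outer terms (X, Y, M, N), i.e. 0 → N →a E →b M → 0 and 0 → Y →a' E →b' X → 0 are short exact sequences. Let V = {g ∈ Aut_Λ(E) : g − id_E ∈ a∘Hom_Λ(M, N)∘b, and there exist g₁ ∈ Aut_Λ(X), g₂ ∈ Aut_Λ(Y) with g∘a' = a'∘g₂ and b'∘g = g₁∘b'}, and let Stab = {(g₁, g₂) ∈ Aut_Λ(X) × Aut_Λ(Y) : there exists g ∈ Aut_Λ(E) with g − id_E ∈ a∘Hom_Λ(M,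 N)∘b, g∘a' = a'∘g₂ and b'∘g = g₁∘b'}. Then: (i) V is a subgroup of Aut_Λ(E); (ii) for each g ∈ V the pair (g₁, g₂) is uniquely determined (since a' is injective and b' is surjective), and the resulting map Φ : V → Aut_Λ(X) × Aut_Λ(Y), g ↦ (g₁, g₂), is a group homomorphism with image exactly Stab; (iii) the kernel of Φ equals {id_E + a∘f∘b : f ∈ Hom_Λ(M, N) with f∘(b∘a') = 0 and (b'∘a)∘f = 0}, and this kernel is in bijection with Hom_Λ(coker(b∘a'), ker(b'∘a)) via the map sending h ∈ Hom_Λ(M/range(b∘a'), ker(b'∘a)) to id_E + a∘ι∘h∘π∘b, where π : M → M/range(b∘a') is the projection and ι : ker(b'∘a) → N the inclusion. -/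
/-! Since `b ∘ a = 0`, the maps `id + a ∘ f ∘ b` compose by adding the `f`'s, so they form a
subgroup of `Aut E` isomorphic to `Hom(M, N)`. `V` is its intersection with the automorphisms
compatible with the second sequence, and `Φ` records the automorphisms induced on `X` and `Y`,
which are unique because `a'` is injective and `b'` surjective. The element `id + a ∘ f ∘ b`
induces identities iff `a ∘ f ∘ (b ∘ a') = 0` and `(b' ∘ a) ∘ f ∘ b = 0`, that is, as `a` is
injective and `b` surjective, iff `f` kills the image of `b ∘ a'` and lands in the kernel of
`b' ∘ a`; such `f` are exactly the homomorphisms `coker(b ∘ a') → ker(b' ∘ a)`. -/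

open LinearMap

namespace Cross

variable {Λ E X Y M N : Type*} [Ring Λ] [AddCommGroup E] [Module Λ E]
  [AddCommGroup X] [Module Λ X] [AddCommGroup Y] [Module Λ Y]
  [AddCommGroup M] [Module Λ M] [AddCommGroup N] [Module Λ N]

section Transvection

variable {a : N →ₗ[Λ] E} {b : E →ₗ[Λ] M}

theorem id_add_comp_comp_id_add (hba : b ∘ₗ a = 0) (f f' : M →ₗ[Λ] N) :
    (LinearMap.id + a ∘ₗ f ∘ₗ b) ∘ₗ (LinearMap.id + a ∘ₗ f' ∘ₗ b) =
      LinearMap.id + a ∘ₗ (f + f') ∘ₗ b := by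
  ext x
  have hx : b (a (f' (b x))) = 0 := LinearMap.congr_fun hba _
  simp only [LinearMap.comp_apply, LinearMap.add_apply, LinearMap.id_apply, map_add, hx,
    map_zero, add_zero]
  abel

def transvection (hba : b ∘ₗ a = 0) (f : M →ₗ[Λ] N) : E ≃ₗ[Λ] E :=
  .ofLinearMap (f := LinearMap.id + a ∘ₗ f ∘ₗ b) (g := LinearMap.id + a ∘ₗ (-f) ∘ₗ b)
    (by rw [id_add_comp_comp_id_add hba, add_neg_cancel]; simp)
    (by rw [id_add_comp_comp_id_add hba, neg_add_cancel]; simp)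

variable (hba : b ∘ₗ a = 0)

theorem transvection_eq_iff {f : M →ₗ[Λ] N} {g : E ≃ₗ[Λ] E} :
    transvection hba f = g ↔ (g : E →ₗ[Λ] E) = LinearMap.id + a ∘ₗ f ∘ₗ b :=
  LinearEquiv.toLinearMap_injective.eq_iff.symm.trans eq_comm

theorem transvection_add (f f' : M →ₗ[Λ] N) :
    transvection hba (f + f') = transvection hba f * transvection hba f' :=
  LinearEquiv.toLinearMap_injective (id_add_comp_comp_id_add hba f f').symm

theorem transvection_zero : transvection hba (0 : M →ₗ[Λ] N) = 1 :=
  LinearEquiv.toLinearMap_injective (by simp [transvection])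

theorem transvection_neg (f : M →ₗ[Λ] N) : transvection hba (-f) = (transvection hba f)⁻¹ :=
  eq_inv_of_mul_eq_one_left (by rw [← transvection_add, neg_add_cancel, transvection_zero])

theorem transvection_injective (ha : Function.Injective a) (hb : Function.Surjective b) :
    Function.Injective (transvection hba) := fun f f' h ↦ by
  have h' : a ∘ₗ f ∘ₗ b = a ∘ₗ f' ∘ₗ b :=
    add_left_cancel (congrArg LinearEquiv.toLinearMap h)
  exact (cancel_right hb).1 ((cancel_left ha).1 h')

def unipotentAut : Subgroup (E ≃ₗ[Λ] E) where
  carrier := Set.range (transvection hba)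
  one_mem' := ⟨0, transvection_zero hba⟩
  mul_mem' := by
    rintro _ _ ⟨f, rfl⟩ ⟨f', rfl⟩
    exact ⟨f + f', transvection_add hba f f'⟩
  inv_mem' := by
    rintro _ ⟨f, rfl⟩
    exact ⟨-f, transvection_neg hba f⟩

theorem mem_unipotentAut {g : E ≃ₗ[Λ] E} :
    g ∈ unipotentAut hba ↔ ∃ f : M →ₗ[Λ] N, (g : E →ₗ[Λ] E) = LinearMap.id + a ∘ₗ f ∘ₗ b :=
  exists_congr fun _ ↦ transvection_eq_iff hba

theorem id_add_comp_comp_eq_self_iff (ha : Function.Injective a) (f : M →ₗ[Λ] N)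
    (a' : Y →ₗ[Λ] E) : (LinearMap.id + a ∘ₗ f ∘ₗ b) ∘ₗ a' = a' ↔ f ∘ₗ (b ∘ₗ a') = 0 := by
  rw [add_comp, id_comp, add_eq_left, ← cancel_left ha, comp_zero]
  simp only [comp_assoc]

theorem comp_id_add_comp_eq_self_iff (hb : Function.Surjective b) (f : M →ₗ[Λ] N)
    (b' : E →ₗ[Λ] X) : b' ∘ₗ (LinearMap.id + a ∘ₗ f ∘ₗ b) = b' ↔ (b' ∘ₗ a) ∘ₗ f = 0 := by
  rw [comp_add, comp_id, add_eq_left, ← cancel_right hb, zero_comp]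
  simp only [comp_assoc]

end Transvection

section LiesOver

variable (a' : Y →ₗ[Λ] E) (b' : E →ₗ[Λ] X)

def LiesOver (g : E ≃ₗ[Λ] E) (p : (X ≃ₗ[Λ] X) × (Y ≃ₗ[Λ] Y)) : Prop :=
  (g : E →ₗ[Λ] E) ∘ₗ a' = a' ∘ₗ (p.2 : Y →ₗ[Λ] Y) ∧
    b' ∘ₗ (g : E →ₗ[Λ] E) = (p.1 : X →ₗ[Λ] X) ∘ₗ b'

variable {a' b'}

theorem LiesOver.mul {g h : E ≃ₗ[Λ] E} {p q : (X ≃ₗ[Λ] X) × (Y ≃ₗ[Λ] Y)}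
    (hg : LiesOver a' b' g p) (hh : LiesOver a' b' h q) : LiesOver a' b' (g * h) (p * q) := by
  constructor
  · change (g : E →ₗ[Λ] E) ∘ₗ (h : E →ₗ[Λ] E) ∘ₗ a' = a' ∘ₗ (p.2 : Y →ₗ[Λ] Y) ∘ₗ q.2
    rw [hh.1, ← comp_assoc, hg.1, comp_assoc]
  · change (b' ∘ₗ (g : E →ₗ[Λ] E)) ∘ₗ (h : E →ₗ[Λ] E) = (p.1 : X →ₗ[Λ] X) ∘ₗ q.1 ∘ₗ b'
    rw [hg.2, comp_assoc, hh.2]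

theorem LiesOver.inv {g : E ≃ₗ[Λ] E} {p : (X ≃ₗ[Λ] X) × (Y ≃ₗ[Λ] Y)}
    (hg : LiesOver a' b' g p) : LiesOver a' b' g⁻¹ p⁻¹ := by
  constructor
  · ext y
    change g.symm (a' y) = a' (p.2.symm y)
    rw [LinearEquiv.symm_apply_eq, ← LinearEquiv.coe_coe g, ← comp_apply, hg.1, comp_apply,
      LinearEquiv.coe_coe, LinearEquiv.apply_symm_apply]
  · ext x
    change b' (g.symm x) = p.1.symm (b' x)
    rw [LinearEquiv.eq_symm_apply, ← LinearEquiv.coe_coe p.1, ← comp_apply, ← hg.2, comp_apply,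
      LinearEquiv.coe_coe, LinearEquiv.apply_symm_apply]

theorem LiesOver.unique (ha' : Function.Injective a') (hb' : Function.Surjective b')
    {g : E ≃ₗ[Λ] E} {p q : (X ≃ₗ[Λ] X) × (Y ≃ₗ[Λ] Y)}
    (hp : LiesOver a' b' g p) (hq : LiesOver a' b' g q) : p = q :=
  Prod.ext (LinearEquiv.toLinearMap_injective ((cancel_right hb').1 (hp.2.symm.trans hq.2)))
    (LinearEquiv.toLinearMap_injective ((cancel_left ha').1 (hp.1.symm.trans hq.1)))

variable (a' b')

def compatibleAut : Subgroup (E ≃ₗ[Λ] E) where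
  carrier := {g | ∃ p, LiesOver a' b' g p}
  one_mem' := ⟨1, ⟨rfl, rfl⟩⟩
  mul_mem' := fun ⟨p, hp⟩ ⟨q, hq⟩ ↦ ⟨p * q, hp.mul hq⟩
  inv_mem' := fun ⟨p, hp⟩ ↦ ⟨p⁻¹, hp.inv⟩

variable {a' b'}

noncomputable def inducedAut (ha' : Function.Injective a') (hb' : Function.Surjective b') :
    compatibleAut a' b' →* (X ≃ₗ[Λ] X) × (Y ≃ₗ[Λ] Y) where
  toFun g := g.2.choose
  map_one' := LiesOver.unique ha' hb' (Exists.choose_spec _) (⟨rfl, rfl⟩)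
  map_mul' g h := LiesOver.unique ha' hb' (Exists.choose_spec _)
    ((Exists.choose_spec g.2).mul (Exists.choose_spec h.2))

theorem liesOver_inducedAut (ha' : Function.Injective a') (hb' : Function.Surjective b')
    (g : compatibleAut a' b') : LiesOver a' b' g (inducedAut ha' hb' g) :=
  g.2.choose_spec

theorem inducedAut_eq_iff (ha' : Function.Injective a') (hb' : Function.Surjective b')
    {g : compatibleAut a' b'} {p : (X ≃ₗ[Λ] X) × (Y ≃ₗ[Λ] Y)} :
    inducedAut ha' hb' g = p ↔ LiesOver a' b' g p :=
  ⟨fun h ↦ h ▸ liesOver_inducedAut ha' hb' g, (liesOver_inducedAut ha' hb' g).unique ha' hb'⟩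

end LiesOver

section QuotientHom

variable {P Q : Type*} [AddCommGroup P] [Module Λ P] [AddCommGroup Q] [Module Λ Q]

def homQuotientRangeKerEquiv (u : P →ₗ[Λ] M) (v : N →ₗ[Λ] Q) :
    (M ⧸ range u →ₗ[Λ] ker v) ≃ {f : M →ₗ[Λ] N // f ∘ₗ u = 0 ∧ v ∘ₗ f = 0} where
  toFun h := ⟨(ker v).subtype ∘ₗ h ∘ₗ (range u).mkQ,
    by simp only [comp_assoc, range_mkQ_comp, comp_zero], by ext; simp⟩
  invFun f := (range u).liftQ (codRestrict (ker v) f fun m ↦ congr($(f.2.2) m))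
    (by rw [ker_codRestrict]; exact range_le_ker_iff.2 f.2.1)
  left_inv h := by ext; rfl
  right_inv f := by ext; rfl

end QuotientHom

section Unipotent

variable {a : N →ₗ[Λ] E} {b : E →ₗ[Λ] M}

/-- The group `V` of the paper; `unipotentInducedAut` below is its map `Φ`. -/
def unipotentCompatibleAut (hba : b ∘ₗ a = 0) (a' : Y →ₗ[Λ] E) (b' : E →ₗ[Λ] X) :
    Subgroup (E ≃ₗ[Λ] E) :=
  unipotentAut hba ⊓ compatibleAut a' b'

variable {a' : Y →ₗ[Λ] E} {b' : E →ₗ[Λ] X}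

noncomputable def unipotentInducedAut (hba : b ∘ₗ a = 0) (ha' : Function.Injective a')
    (hb' : Function.Surjective b') :
    unipotentCompatibleAut hba a' b' →* (X ≃ₗ[Λ] X) × (Y ≃ₗ[Λ] Y) :=
  (inducedAut ha' hb').comp (Subgroup.inclusion inf_le_right)

variable {hba : b ∘ₗ a = 0}

theorem unipotentInducedAut_eq_iff (ha' : Function.Injective a') (hb' : Function.Surjective b')
    {g : unipotentCompatibleAut hba a' b'} {p : (X ≃ₗ[Λ] X) × (Y ≃ₗ[Λ] Y)} :
    unipotentInducedAut hba ha' hb' g = p ↔ LiesOver a' b' g p :=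
  inducedAut_eq_iff ha' hb'

theorem liesOver_transvection_one_iff (ha : Function.Injective a)
    (hb : Function.Surjective b) {f : M →ₗ[Λ] N} :
    LiesOver a' b' (transvection hba f) 1 ↔ f ∘ₗ (b ∘ₗ a') = 0 ∧ (b' ∘ₗ a) ∘ₗ f = 0 :=
  and_congr (id_add_comp_comp_eq_self_iff ha f a') (comp_id_add_comp_eq_self_iff hb f b')

theorem mem_ker_unipotentInducedAut (ha : Function.Injective a) (hb : Function.Surjective b)
    (ha' : Function.Injective a') (hb' : Function.Surjective b')
    {g : unipotentCompatibleAut hba a' b'} :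
    g ∈ (unipotentInducedAut hba ha' hb').ker ↔ ∃ f : M →ₗ[Λ] N,
      f ∘ₗ (b ∘ₗ a') = 0 ∧ (b' ∘ₗ a) ∘ₗ f = 0 ∧
        ((g : E ≃ₗ[Λ] E) : E →ₗ[Λ] E) = LinearMap.id + a ∘ₗ f ∘ₗ b := by
  rw [MonoidHom.mem_ker, unipotentInducedAut_eq_iff]
  obtain ⟨f₀, hf₀⟩ := g.2.1
  constructor
  · intro hg
    rw [← hf₀, liesOver_transvection_one_iff ha hb] at hg
    exact ⟨f₀, hg.1, hg.2, (transvection_eq_iff hba).1 hf₀⟩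
  · rintro ⟨f, hf, hf', hg⟩
    rw [← (transvection_eq_iff hba).2 hg]
    exact (liesOver_transvection_one_iff ha hb).2 ⟨hf, hf'⟩

noncomputable def transvectionEquivKer (ha : Function.Injective a) (hb : Function.Surjective b)
    (ha' : Function.Injective a') (hb' : Function.Surjective b') :
    {f : M →ₗ[Λ] N // f ∘ₗ (b ∘ₗ a') = 0 ∧ (b' ∘ₗ a) ∘ₗ f = 0} ≃
      (unipotentInducedAut hba ha' hb').ker :=
  .ofBijective
    (fun f ↦ ⟨⟨transvection hba f, ⟨f, rfl⟩, 1, (liesOver_transvection_one_iff ha hb).2 f.2⟩,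
      (mem_ker_unipotentInducedAut ha hb ha' hb').2 ⟨f, f.2.1, f.2.2, rfl⟩⟩)
    ⟨fun _ _ h ↦ Subtype.ext (transvection_injective hba ha hb congr(($h : E ≃ₗ[Λ] E))),
      fun g ↦
        have ⟨f, hf, hf', hg⟩ := (mem_ker_unipotentInducedAut ha hb ha' hb').1 g.2
        ⟨⟨f, hf, hf'⟩, Subtype.ext (Subtype.ext ((transvection_eq_iff hba).2 hg))⟩⟩

end Unipotent

end Cross

open Cross

theorem stabilizer_as_quotient_of_V_general
    (Λ : Type*) [Ring Λ]
    (E X Y M N : Type*) [AddCommGroup E] [Module Λ E]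
    [AddCommGroup X] [Module Λ X] [AddCommGroup Y] [Module Λ Y]
    [AddCommGroup M] [Module Λ M] [AddCommGroup N] [Module Λ N]
    (a : N →ₗ[Λ] E) (b : E →ₗ[Λ] M) (a' : Y →ₗ[Λ] E) (b' : E →ₗ[Λ] X)
    (ha : Function.Injective a) (hb : Function.Surjective b)
    (hab : LinearMap.range a = LinearMap.ker b)
    (ha' : Function.Injective a') (hb' : Function.Surjective b') :
    ∃ H : Subgroup (E ≃ₗ[Λ] E),
      -- (i) V is a subgroup of Aut(E)
      (H : Set (E ≃ₗ[Λ] E)) =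
        {g : E ≃ₗ[Λ] E |
          (∃ f : M →ₗ[Λ] N, (g : E →ₗ[Λ] E) = LinearMap.id + a ∘ₗ f ∘ₗ b) ∧
          ∃ (g₁ : X ≃ₗ[Λ] X) (g₂ : Y ≃ₗ[Λ] Y),
            (g : E →ₗ[Λ] E) ∘ₗ a' = a' ∘ₗ (g₂ : Y →ₗ[Λ] Y) ∧
            b' ∘ₗ (g : E →ₗ[Λ] E) = (g₁ : X →ₗ[Λ] X) ∘ₗ b'} ∧
      -- (ii) g ↦ (g₁, g₂) is a well-defined group homomorphism onto Stab
      ∃ Φ : H →* (X ≃ₗ[Λ] X) × (Y ≃ₗ[Λ] Y),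
        (∀ g : H, ((g : E ≃ₗ[Λ] E) : E →ₗ[Λ] E) ∘ₗ a' =
            a' ∘ₗ ((Φ g).2 : Y →ₗ[Λ] Y) ∧
          b' ∘ₗ ((g : E ≃ₗ[Λ] E) : E →ₗ[Λ] E) = ((Φ g).1 : X →ₗ[Λ] X) ∘ₗ b') ∧
        Set.range Φ =
          {p : (X ≃ₗ[Λ] X) × (Y ≃ₗ[Λ] Y) | ∃ g : E ≃ₗ[Λ] E,
            (∃ f : M →ₗ[Λ] N, (g : E →ₗ[Λ] E) = LinearMap.id + a ∘ₗ f ∘ₗ b) ∧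
            (g : E →ₗ[Λ] E) ∘ₗ a' = a' ∘ₗ (p.2 : Y →ₗ[Λ] Y) ∧
            b' ∘ₗ (g : E →ₗ[Λ] E) = (p.1 : X →ₗ[Λ] X) ∘ₗ b'} ∧
        -- (iii) kernel description
        ((Φ.ker : Set H) = {g : H | ∃ f : M →ₗ[Λ] N,
            f ∘ₗ (b ∘ₗ a') = 0 ∧ (b' ∘ₗ a) ∘ₗ f = 0 ∧
            (((g : E ≃ₗ[Λ] E)) : E →ₗ[Λ] E) = LinearMap.id + a ∘ₗ f ∘ₗ b}) ∧
        -- and the kernel is in bijection with Hom(coker(b∘a'), ker(b'∘a))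
        ∃ e : ((M ⧸ LinearMap.range (b ∘ₗ a')) →ₗ[Λ] ↥(LinearMap.ker (b' ∘ₗ a)))
            ≃ Φ.ker,
          ∀ (h : (M ⧸ LinearMap.range (b ∘ₗ a')) →ₗ[Λ]
              ↥(LinearMap.ker (b' ∘ₗ a))) (x : E),
            ((e h : H) : E ≃ₗ[Λ] E) x =
              x + a ((LinearMap.ker (b' ∘ₗ a)).subtype
                (h (Submodule.Quotient.mk (b x)))) := by
  have hba : b ∘ₗ a = 0 := range_le_ker_iff.1 hab.le
  refine ⟨unipotentCompatibleAut hba a' b', ?_, unipotentInducedAut hba ha' hb',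
    fun g ↦ (unipotentInducedAut_eq_iff ha' hb').1 rfl, ?_,
    Set.ext fun _ ↦ mem_ker_unipotentInducedAut ha hb ha' hb',
    (homQuotientRangeKerEquiv _ _).trans (transvectionEquivKer ha hb ha' hb'), fun _ _ ↦ rfl⟩
  · ext g
    exact and_congr (mem_unipotentAut hba)
      ⟨fun ⟨p, hp⟩ ↦ ⟨p.1, p.2, hp⟩, fun ⟨g₁, g₂, hg⟩ ↦ ⟨(g₁, g₂), hg⟩⟩
  · ext p
    constructor
    · rintro ⟨g, rfl⟩
      exact ⟨g, (mem_unipotentAut hba).1 g.2.1, (unipotentInducedAut_eq_iff ha' hb').1 rfl⟩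
    · rintro ⟨g, hg, hp⟩
      exact ⟨⟨g, (mem_unipotentAut hba).2 hg, p, hp⟩, (unipotentInducedAut_eq_iff ha' hb').2 hp⟩

/-- For a cross `(a, b, a', b')` on `E` with outer terms `(X, Y, M, N)`, the set
`V = {g ∈ Aut(E) : g - id ∈ a∘Hom(M,N)∘b, g∘a' = a'∘g₂, b'∘g = g₁∘b'}` is a
subgroup of `Aut(E)`, the assignment `g ↦ (g₁, g₂)` is a group homomorphism
`Φ : V → Aut(X) × Aut(Y)` with image the stabilizer `Stab`, and its kernel is
`{id + a∘f∘b : f∘(b∘a') = 0, (b'∘a)∘f = 0}`, which is in bijection with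
`Hom(coker(b∘a'), ker(b'∘a))`. -/
theorem stabilizer_as_quotient_of_V
    (k Λ : Type*) [Field k] [Ring Λ] [Algebra k Λ]
    (E X Y M N : Type*) [AddCommGroup E] [Module Λ E]
    [AddCommGroup X] [Module Λ X] [AddCommGroup Y] [Module Λ Y]
    [AddCommGroup M] [Module Λ M] [AddCommGroup N] [Module Λ N]
    (a : N →ₗ[Λ] E) (b : E →ₗ[Λ] M) (a' : Y →ₗ[Λ] E) (b' : E →ₗ[Λ] X)
    (ha : Function.Injective a) (hb : Function.Surjective b)
    (hab : LinearMap.range a = LinearMap.ker b)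
    (ha' : Function.Injective a') (hb' : Function.Surjective b')
    (hab' : LinearMap.range a' = LinearMap.ker b') :
    ∃ H : Subgroup (E ≃ₗ[Λ] E),
      -- (i) V is a subgroup of Aut(E)
      (H : Set (E ≃ₗ[Λ] E)) =
        {g : E ≃ₗ[Λ] E |
          (∃ f : M →ₗ[Λ] N, (g : E →ₗ[Λ] E) = LinearMap.id + a ∘ₗ f ∘ₗ b) ∧
          ∃ (g₁ : X ≃ₗ[Λ] X) (g₂ : Y ≃ₗ[Λ] Y),
            (g : E →ₗ[Λ] E) ∘ₗ a' = a' ∘ₗ (g₂ : Y →ₗ[Λ] Y) ∧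
            b' ∘ₗ (g : E →ₗ[Λ] E) = (g₁ : X →ₗ[Λ] X) ∘ₗ b'} ∧
      -- (ii) g ↦ (g₁, g₂) is a well-defined group homomorphism onto Stab
      ∃ Φ : H →* (X ≃ₗ[Λ] X) × (Y ≃ₗ[Λ] Y),
        (∀ g : H, ((g : E ≃ₗ[Λ] E) : E →ₗ[Λ] E) ∘ₗ a' =
            a' ∘ₗ ((Φ g).2 : Y →ₗ[Λ] Y) ∧
          b' ∘ₗ ((g : E ≃ₗ[Λ] E) : E →ₗ[Λ] E) = ((Φ g).1 : X →ₗ[Λ] X) ∘ₗ b') ∧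
        Set.range Φ =
          {p : (X ≃ₗ[Λ] X) × (Y ≃ₗ[Λ] Y) | ∃ g : E ≃ₗ[Λ] E,
            (∃ f : M →ₗ[Λ] N, (g : E →ₗ[Λ] E) = LinearMap.id + a ∘ₗ f ∘ₗ b) ∧
            (g : E →ₗ[Λ] E) ∘ₗ a' = a' ∘ₗ (p.2 : Y →ₗ[Λ] Y) ∧
            b' ∘ₗ (g : E →ₗ[Λ] E) = (p.1 : X →ₗ[Λ] X) ∘ₗ b'} ∧
        -- (iii) kernel description
        ((Φ.ker : Set H) = {g : H | ∃ f : M →ₗ[Λ] N,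
            f ∘ₗ (b ∘ₗ a') = 0 ∧ (b' ∘ₗ a) ∘ₗ f = 0 ∧
            (((g : E ≃ₗ[Λ] E)) : E →ₗ[Λ] E) = LinearMap.id + a ∘ₗ f ∘ₗ b}) ∧
        -- and the kernel is in bijection with Hom(coker(b∘a'), ker(b'∘a))
        ∃ e : ((M ⧸ LinearMap.range (b ∘ₗ a')) →ₗ[Λ] ↥(LinearMap.ker (b' ∘ₗ a)))
            ≃ Φ.ker,
          ∀ (h : (M ⧸ LinearMap.range (b ∘ₗ a')) →ₗ[Λ]
              ↥(LinearMap.ker (b' ∘ₗ a))) (x : E),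
            ((e h : H) : E ≃ₗ[Λ] E) x =
              x + a ((LinearMap.ker (b' ∘ₗ a)).subtype
                (h (Submodule.Quotient.mk (b x)))) :=
  stabilizer_as_quotient_of_V_general Λ E X Y M N a b a' b' ha hb hab ha' hb'
end
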